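/- Let [a,b] and [p,q] be two distinct semistandard 2-row tableaux with rows in D such that supp([p,q]) = supp([a,b]) (i.e., {p_j, q_j} = {a_j, b_j} for all columns j). If [a,b] is standard (a_j ≤ b_j for all j) and [p,q] is not equal to [a,b], then a >_τ p >_τ q >_τ b in the lexicographic order τ. -/
import Mathlib


def lexGT {n : ℕ} (u v : Fin n → ℕ) : Prop :=
  ∃ i : Fin n, u i < v i ∧ ∀ j : Fin n, j < i → u j = v j

def lexGE {n : ℕ} (u v : Fin n → ℕ) : Prop := u = v ∨ lexGT u v

def inD {n : ℕ} (m : ℕ) (a : Fin n → ℕ) : Prop :=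
  (∀ j, 1 ≤ a j) ∧ StrictMono a ∧ ∀ j, a j ≤ m

lemma pair_multiset_eq {x y z w : ℕ} (h : ({x, y} : Multiset ℕ) = {z, w}) :
    (x = z ∧ y = w) ∨ (x = w ∧ y = z) := by
  simp only [Multiset.insert_eq_cons, Multiset.cons_eq_cons, Multiset.singleton_eq_cons_iff, Multiset.singleton_inj] at h
  tauto

/-- If `[a,b]` is a standard 2-row tableau and `[p,q]` is a different semistandard
2-row tableau with the same column supports, then `a >_τ p >_τ q >_τ b`. -/
theorem stmt_8 {n m : ℕ} (a b p q : Fin n → ℕ)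
    (ha : inD m a) (hb : inD m b) (hp : inD m p) (hq : inD m q)
    (hab : lexGE a b) (hpq : lexGE p q)
    (hsupp : ∀ j, ({p j, q j} : Multiset ℕ) = {a j, b j})
    (hstd : ∀ j, a j ≤ b j)
    (hne : (p, q) ≠ (a, b)) :
    lexGT a p ∧ lexGT p q ∧ lexGT q b := by
  have hcol : ∀ j, (p j = a j ∧ q j = b j) ∨ (p j = b j ∧ q j = a j) :=
    fun j => pair_multiset_eq (hsupp j)
  -- there is a column where the first alternative fails
  have hex : ∃ j : Fin n, ¬ (p j = a j ∧ q j = b j) := by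
    by_contra hc
    rw [not_exists] at hc
    exact hne (Prod.ext (funext fun j => (not_not.mp (hc j)).1)
      (funext fun j => (not_not.mp (hc j)).2))
  obtain ⟨j0, hj0⟩ := hex
  classical
  have hne' : (Finset.univ.filter (fun j : Fin n => ¬ (p j = a j ∧ q j = b j))).Nonempty :=
    ⟨j0, Finset.mem_filter.mpr ⟨Finset.mem_univ j0, hj0⟩⟩
  set i := (Finset.univ.filter (fun j : Fin n => ¬ (p j = a j ∧ q j = b j))).min' hne' with hi
  have hmemi : ¬ (p i = a i ∧ q i = b i) :=
    (Finset.mem_filter.mp (Finset.min'_mem _ hne')).2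
  have hlt : ∀ j : Fin n, j < i → p j = a j ∧ q j = b j := by
    intro j hj
    by_contra hc
    exact absurd (Finset.min'_le _ j (Finset.mem_filter.mpr ⟨Finset.mem_univ j, hc⟩))
      (not_le.mpr hj)
  have hcase : p i = b i ∧ q i = a i := (hcol i).resolve_left hmemi
  have hneq : a i < b i := by
    rcases lt_or_eq_of_le (hstd i) with h | h
    · exact h
    · exact absurd ⟨hcase.1.trans h.symm, hcase.2.trans h⟩ hmemi
  refine ⟨⟨i, by rw [hcase.1]; exact hneq, fun j hj => ((hlt j hj).1).symm⟩, ?_,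
    ⟨i, by rw [hcase.2]; exact hneq, fun j hj => (hlt j hj).2⟩⟩
  rcases hpq with h | h
  · exact absurd (congrFun h i) (by rw [hcase.1, hcase.2]; exact hneq.ne')
  · exact h
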